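/- Let f be the density of N(0, I_ℓ) and g the density of N(0, Σ) on ℝ^ℓ, where Σ is symmetric positive definite with eigenvalues λ₁,…,λ_ℓ. Then ( ∫_{ℝ^ℓ} √(f(x)·g(x)) dx )² = det(Σ)^{1/2} / det( (I + Σ)/2 ) = ∏_{i=1}^ℓ 2·√λ_i / (1 + λ_i). -/

import Mathlib

open MeasureTheory Matrix

/-- Density of the Gaussian measure `N(0, S)` on `ℝ^ℓ`
(`S` an invertible covariance matrix):
`(2π)^{−ℓ/2} · det(S)^{−1/2} · exp(−xᵀ S⁻¹ x / 2)`. -/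
noncomputable def gaussPdf (ℓ : ℕ) (S : Matrix (Fin ℓ) (Fin ℓ) ℝ) (x : Fin ℓ → ℝ) : ℝ :=
  (2 * Real.pi) ^ (-(ℓ : ℝ) / 2) * S.det ^ (-(1 : ℝ) / 2) *
    Real.exp (-(x ⬝ᵥ S⁻¹.mulVec x) / 2)


lemma gauss_int {ℓ : ℕ} {B : Matrix (Fin ℓ) (Fin ℓ) ℝ} (hB : B.PosDef) :
    ∫ x : Fin ℓ → ℝ, Real.exp (-(x ⬝ᵥ B *ᵥ x) / 2)
      = (2 * Real.pi) ^ ((ℓ : ℝ) / 2) * B.det ^ (-(1 : ℝ) / 2) := by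
  have hH := hB.1
  set V : Matrix (Fin ℓ) (Fin ℓ) ℝ := (hH.eigenvectorUnitary : Matrix (Fin ℓ) (Fin ℓ) ℝ) with hVdef
  set lam : Fin ℓ → ℝ := hH.eigenvalues with hlam
  have hpos : ∀ i, 0 < lam i := hB.eigenvalues_pos
  have hmem := hH.eigenvectorUnitary.2
  have hsV : star V * V = 1 := (Matrix.mem_unitaryGroup_iff').mp hmem
  have hVs : V * star V = 1 := (Matrix.mem_unitaryGroup_iff).mp hmem
  have hdet2 : V.det * V.det = 1 := by
    have := congrArg Matrix.det hVs
    rwa [det_mul, det_one, star_eq_conjTranspose, conjTranspose_eq_transpose_of_trivial,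
      det_transpose] at this
  have hdet : V.det ≠ 0 := by
    intro h; rw [h, mul_zero] at hdet2; exact one_ne_zero hdet2.symm
  have habs : |V.det⁻¹| = 1 := by
    rcases mul_self_eq_one_iff.mp hdet2 with h | h <;> rw [h] <;> norm_num
  have hcont : Continuous (Matrix.toLin' V) := LinearMap.continuous_on_pi _
  have hmp : MeasurePreserving (Matrix.toLin' V) volume volume := by
    refine ⟨hcont.measurable, ?_⟩
    rw [Real.map_matrix_volume_pi_eq_smul_volume_pi hdet, habs]
    simp
  have hinv : Invertible V := invertibleOfRightInverse V (star V) hVs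
  have hemb : MeasurableEmbedding (Matrix.toLin' V) := by
    have := ((Matrix.toLinearEquiv' V hinv).toContinuousLinearEquiv.toHomeomorph).measurableEmbedding
    convert this using 1
    rfl
  have hdiag : Vᵀ * B * V = diagonal lam := by
    have hsV' : Vᵀ * V = 1 := by
      rwa [star_eq_conjTranspose, conjTranspose_eq_transpose_of_trivial] at hsV
    conv_lhs => rw [hH.spectral_theorem]
    have h2 : diagonal (RCLike.ofReal ∘ hH.eigenvalues) = diagonal lam := by congr 1
    rw [Unitary.conjStarAlgAut_apply, ← hVdef, h2, star_eq_conjTranspose, conjTranspose_eq_transpose_of_trivial]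
    calc Vᵀ * (V * diagonal lam * Vᵀ) * V
        = (Vᵀ * V) * diagonal lam * (Vᵀ * V) := by
          simp only [Matrix.mul_assoc]
      _ = diagonal lam := by rw [hsV']; simp
  have hquad : ∀ y : Fin ℓ → ℝ, ((Matrix.toLin' V) y) ⬝ᵥ B *ᵥ ((Matrix.toLin' V) y)
      = ∑ i, lam i * y i ^ 2 := by
    intro y
    rw [Matrix.toLin'_apply]
    have h1 : (V *ᵥ y) ⬝ᵥ B *ᵥ (V *ᵥ y) = y ⬝ᵥ (Vᵀ * B * V) *ᵥ y := by
      rw [mulVec_mulVec, dotProduct_mulVec, dotProduct_mulVec, ← vecMul_transpose,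
        vecMul_vecMul, Matrix.mul_assoc]
    rw [h1, hdiag]
    simp only [dotProduct, mulVec_diagonal]
    exact Finset.sum_congr rfl fun i _ => by ring
  have hdetB : B.det = ∏ i, lam i := by
    have := hH.det_eq_prod_eigenvalues
    simpa using this
  calc ∫ x : Fin ℓ → ℝ, Real.exp (-(x ⬝ᵥ B *ᵥ x) / 2)
      = ∫ y : Fin ℓ → ℝ, Real.exp (-(((Matrix.toLin' V) y) ⬝ᵥ B *ᵥ ((Matrix.toLin' V) y)) / 2) :=
        (hmp.integral_comp hemb _).symm
    _ = ∫ y : Fin ℓ → ℝ, ∏ i, Real.exp (-(lam i / 2) * y i ^ 2) := by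
        congr 1; funext y
        rw [hquad y, ← Real.exp_sum]
        congr 1
        rw [neg_div, Finset.sum_div, ← Finset.sum_neg_distrib]
        exact Finset.sum_congr rfl fun i _ => by ring
    _ = ∏ i, ∫ t : ℝ, Real.exp (-(lam i / 2) * t ^ 2) :=
        integral_fintype_prod_eq_prod (fun i t => Real.exp (-(lam i / 2) * t ^ 2))
    _ = ∏ i, Real.sqrt (Real.pi / (lam i / 2)) := by
        exact Finset.prod_congr rfl fun i _ => integral_gaussian (lam i / 2)
    _ = ∏ i, ((2 * Real.pi) ^ ((1:ℝ)/2) * lam i ^ (-(1:ℝ)/2)) := by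
        refine Finset.prod_congr rfl fun i _ => ?_
        have h2 : Real.pi / (lam i / 2) = (2 * Real.pi) / lam i := by
          field_simp
        rw [h2, Real.sqrt_eq_rpow, Real.div_rpow (by positivity) (hpos i).le,
          div_eq_mul_inv, ← Real.rpow_neg (hpos i).le]
        norm_num
    _ = (2 * Real.pi) ^ ((ℓ : ℝ) / 2) * B.det ^ (-(1 : ℝ) / 2) := by
        rw [Finset.prod_mul_distrib, Finset.prod_const,
          Real.finset_prod_rpow _ _ (fun i _ => (hpos i).le), ← hdetB, Finset.card_univ, Fintype.card_fin,
          ← Real.rpow_natCast ((2 * Real.pi) ^ ((1:ℝ)/2)) ℓ,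
          ← Real.rpow_mul (by positivity)]
        rw [one_div, inv_mul_eq_div]

lemma posdef_smul' {n : ℕ} {A : Matrix (Fin n) (Fin n) ℝ} (hA : A.PosDef) {c : ℝ} (hc : 0 < c) :
    (c • A).PosDef := by
  rw [posDef_iff_dotProduct_mulVec]
  refine ⟨?_, fun x hx => ?_⟩
  · unfold Matrix.IsHermitian
    rw [conjTranspose_smul, hA.1]
    simp
  · have := hA.dotProduct_mulVec_pos hx
    rw [smul_mulVec, dotProduct_smul, smul_eq_mul]
    positivity

/-- If `f` is the density of `N(0, I_ℓ)` and `g` that of `N(0, Σ)` with `Σ`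
symmetric positive definite with eigenvalues `λ₁, …, λ_ℓ`, then
`(∫ √(f g))² = det(Σ)^{1/2} / det((I + Σ)/2) = ∏ᵢ 2√λᵢ/(1 + λᵢ)`. -/
theorem stmt_11 (ℓ : ℕ) (S : Matrix (Fin ℓ) (Fin ℓ) ℝ) (hS : S.PosDef) :
    ((∫ x : Fin ℓ → ℝ, Real.sqrt (gaussPdf ℓ 1 x * gaussPdf ℓ S x)) ^ 2 =
      Real.sqrt S.det / ((2 : ℝ)⁻¹ • (1 + S)).det) ∧
    (Real.sqrt S.det / ((2 : ℝ)⁻¹ • (1 + S)).det =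
      ∏ i, 2 * Real.sqrt (hS.1.eigenvalues i) / (1 + hS.1.eigenvalues i)) := by
  have hdS : 0 < S.det := hS.det_pos
  have hSinv : S⁻¹.PosDef := hS.inv
  have hB : ((2:ℝ)⁻¹ • (1 + S⁻¹)).PosDef := posdef_smul' (Matrix.PosDef.one.add hSinv) (by norm_num)
  have hC : ((2:ℝ)⁻¹ • (1 + S)).PosDef := posdef_smul' (Matrix.PosDef.one.add hS) (by norm_num)
  have hCpos : 0 < ((2:ℝ)⁻¹ • (1 + S)).det := hC.det_pos
  set B := (2:ℝ)⁻¹ • (1 + S⁻¹) with hBdef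
  set C := ((2:ℝ)⁻¹ • (1 + S)).det with hCdef
  have hdB : 0 < B.det := hB.det_pos
  have hSS : S⁻¹ * S = 1 := Matrix.nonsing_inv_mul S (isUnit_iff_ne_zero.mpr hdS.ne')
  have hBfact : B = S⁻¹ * ((2:ℝ)⁻¹ • (1 + S)) := by
    rw [Matrix.mul_smul, Matrix.mul_add, Matrix.mul_one, hSS, hBdef, add_comm]
  have hdetB : B.det = S.det⁻¹ * C := by
    rw [hBfact, det_mul, S.det_nonsing_inv, Ring.inverse_eq_inv']
  -- pointwise identity
  have hone : (1 : Matrix (Fin ℓ) (Fin ℓ) ℝ)⁻¹ = 1 := Matrix.inv_eq_left_inv (by simp)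
  have hpt : ∀ x : Fin ℓ → ℝ, Real.sqrt (gaussPdf ℓ 1 x * gaussPdf ℓ S x)
      = (2 * Real.pi) ^ (-(ℓ : ℝ) / 2) * S.det ^ (-(1 : ℝ) / 4) *
        Real.exp (-(x ⬝ᵥ B *ᵥ x) / 2) := by
    intro x
    have e1 : gaussPdf ℓ 1 x = (2 * Real.pi) ^ (-(ℓ : ℝ) / 2) * Real.exp (-(x ⬝ᵥ x) / 2) := by
      unfold gaussPdf
      rw [hone, Matrix.det_one, Real.one_rpow, Matrix.one_mulVec, mul_one]
    have e2 : x ⬝ᵥ x + x ⬝ᵥ S⁻¹ *ᵥ x = x ⬝ᵥ (1 + S⁻¹) *ᵥ x := by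
      rw [Matrix.add_mulVec, Matrix.one_mulVec, dotProduct_add]
    have hq : x ⬝ᵥ B *ᵥ x = (2:ℝ)⁻¹ * (x ⬝ᵥ (1 + S⁻¹) *ᵥ x) := by
      rw [hBdef, smul_mulVec, dotProduct_smul, smul_eq_mul]
    have h2p : ((2 * Real.pi) ^ (-(ℓ:ℝ)/2)) ^ 2 = (2 * Real.pi) ^ (-(ℓ:ℝ)) := by
      rw [← Real.rpow_natCast ((2 * Real.pi) ^ (-(ℓ:ℝ)/2)) 2,
        ← Real.rpow_mul (by positivity)]
      norm_num
    have h2d : (S.det ^ (-(1:ℝ)/4)) ^ 2 = S.det ^ (-(1:ℝ)/2) := by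
      rw [← Real.rpow_natCast (S.det ^ (-(1:ℝ)/4)) 2, ← Real.rpow_mul hdS.le]
      norm_num
    have h2e : (Real.exp (-(x ⬝ᵥ B *ᵥ x) / 2)) ^ 2
        = Real.exp (-(x ⬝ᵥ x) / 2) * Real.exp (-(x ⬝ᵥ S⁻¹ *ᵥ x) / 2) := by
      rw [sq, ← Real.exp_add, ← Real.exp_add]
      congr 1
      rw [hq, ← e2]; ring
    have e3 : gaussPdf ℓ 1 x * gaussPdf ℓ S x
        = ((2 * Real.pi) ^ (-(ℓ : ℝ) / 2) * S.det ^ (-(1 : ℝ) / 4) *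
            Real.exp (-(x ⬝ᵥ B *ᵥ x) / 2)) ^ 2 := by
      rw [e1]
      unfold gaussPdf
      rw [mul_pow, mul_pow, h2p, h2d, h2e]
      have : ((2 * Real.pi) ^ (-(ℓ:ℝ)/2)) * ((2 * Real.pi) ^ (-(ℓ:ℝ)/2)) = (2 * Real.pi) ^ (-(ℓ:ℝ)) := by
        rw [← sq, h2p]
      rw [← this]; ring
    rw [e3, Real.sqrt_sq (by positivity)]
  have hint : (∫ x : Fin ℓ → ℝ, Real.sqrt (gaussPdf ℓ 1 x * gaussPdf ℓ S x))
      = S.det ^ (-(1:ℝ)/4) * B.det ^ (-(1:ℝ)/2) := by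
    simp only [hpt]
    rw [MeasureTheory.integral_const_mul, gauss_int hB]
    have : (2 * Real.pi) ^ (-(ℓ:ℝ)/2) * (2 * Real.pi) ^ ((ℓ:ℝ)/2) = 1 := by
      rw [← Real.rpow_add (by positivity), neg_div, neg_add_cancel, Real.rpow_zero]
    calc (2 * Real.pi) ^ (-(ℓ:ℝ)/2) * S.det ^ (-(1:ℝ)/4) *
          ((2 * Real.pi) ^ ((ℓ:ℝ)/2) * B.det ^ (-(1:ℝ)/2))
        = ((2 * Real.pi) ^ (-(ℓ:ℝ)/2) * (2 * Real.pi) ^ ((ℓ:ℝ)/2)) *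
          (S.det ^ (-(1:ℝ)/4) * B.det ^ (-(1:ℝ)/2)) := by ring
      _ = S.det ^ (-(1:ℝ)/4) * B.det ^ (-(1:ℝ)/2) := by rw [this, one_mul]
  constructor
  · rw [hint, mul_pow]
    have h2d : (S.det ^ (-(1:ℝ)/4)) ^ 2 = S.det ^ (-(1:ℝ)/2) := by
      rw [← Real.rpow_natCast (S.det ^ (-(1:ℝ)/4)) 2, ← Real.rpow_mul hdS.le]
      norm_num
    have h2b : (B.det ^ (-(1:ℝ)/2)) ^ 2 = B.det⁻¹ := by
      rw [← Real.rpow_natCast (B.det ^ (-(1:ℝ)/2)) 2, ← Real.rpow_mul hdB.le]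
      norm_num [Real.rpow_neg_one]
    rw [h2d, h2b, hdetB, mul_inv, inv_inv]
    have : S.det ^ (-(1:ℝ)/2) * S.det = Real.sqrt S.det := by
      nth_rewrite 2 [← Real.rpow_one S.det]
      rw [← Real.rpow_add hdS, Real.sqrt_eq_rpow]
      norm_num
    rw [← mul_assoc, this, div_eq_mul_inv]
  · -- part 2
    have hH := hS.1
    set lam : Fin ℓ → ℝ := hH.eigenvalues with hlam
    have hpos : ∀ i, 0 < lam i := hS.eigenvalues_pos
    have hdetS : S.det = ∏ i, lam i := by simpa using hH.det_eq_prod_eigenvalues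
    set V : Matrix (Fin ℓ) (Fin ℓ) ℝ := (hH.eigenvectorUnitary : Matrix (Fin ℓ) (Fin ℓ) ℝ) with hVdef
    have hmem := hH.eigenvectorUnitary.2
    have hVs : V * star V = 1 := (Matrix.mem_unitaryGroup_iff).mp hmem
    have hsV : star V * V = 1 := (Matrix.mem_unitaryGroup_iff').mp hmem
    have hdet1S : (1 + S).det = ∏ i, (1 + lam i) := by
      have hfac : 1 + S = V * diagonal (fun i => 1 + lam i) * star V := by
        have h2 : diagonal (RCLike.ofReal ∘ hH.eigenvalues) = diagonal lam := by congr 1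
        conv_lhs => rw [hH.spectral_theorem, Unitary.conjStarAlgAut_apply, h2, ← hVdef]
        have hone' : (1 : Matrix (Fin ℓ) (Fin ℓ) ℝ) = V * 1 * star V := by
          rw [Matrix.mul_one, hVs]
        nth_rewrite 1 [hone']
        have hd : (diagonal fun i => 1 + lam i) = 1 + diagonal lam := by
          ext i j
          by_cases h : i = j <;> simp [diagonal, h, Matrix.one_apply]
        rw [hd, Matrix.mul_add V 1 (diagonal lam), Matrix.add_mul]
      rw [hfac, det_mul, det_mul, mul_comm, ← mul_assoc, ← det_mul, hsV, det_one, one_mul,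
        det_diagonal]
    have hCval : C = (2:ℝ)⁻¹ ^ ℓ * ∏ i, (1 + lam i) := by
      rw [hCdef, Matrix.det_smul, hdet1S, Fintype.card_fin]
    rw [hCval, hdetS, Real.sqrt_eq_rpow, ← Real.finset_prod_rpow _ _ (fun i _ => (hpos i).le)]
    rw [Finset.prod_div_distrib, Finset.prod_mul_distrib, Finset.prod_const, Finset.card_univ,
      Fintype.card_fin, inv_pow]
    have hprodpos : 0 < ∏ i, (1 + lam i) := Finset.prod_pos fun i _ => by have := hpos i; positivity
    have : ∀ i, Real.sqrt (lam i) = lam i ^ ((1:ℝ)/2) := fun i => Real.sqrt_eq_rpow _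
    simp only [this]
    have h2l : ((2:ℝ)^ℓ) ≠ 0 := by positivity
    rw [div_eq_div_iff (mul_pos (inv_pos.mpr (by positivity)) hprodpos).ne' hprodpos.ne']
    field_simp
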